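/- Let n ≥ 1, β > 0, t > 0, and let μ be a nonzero nonnegative finite Borel measure on ℝⁿ. Define v_t(x) = (2πβ(1−e^{−2t}))^{−n/2} ∫_{ℝⁿ} exp(−|x − e^{−t}y|²/(2β(1−e^{−2t}))) dμ(y), the solution at time t of the β-Fokker–Planck equation ∂_t v = βΔv + x·∇v + n v with initial data μ. Then for every x ∈ ℝⁿ, ∇² log v_t(x) ≥ −(1/((1−e^{−2t})β))·id in the sense of symmetric matrices. In particular, if v = v_*(t_*,·) where v_* solves the 2β-Fokker–Planck equation with nonnegative finite initial measure and t_* = (1/2) log 2 (i.e. v belongs to the class FP(β)), then ∇² log v ≥ −(1/β)·id. -/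

import Mathlib

open MeasureTheory Real Filter

noncomputable section

/-- The centred Gaussian density on `ℝⁿ` with variance `β`:
`γ_β(x) = (2πβ)^{-n/2} exp(-|x|²/(2β))`. -/
def gaussDensity (n : ℕ) (β : ℝ) (x : EuclideanSpace ℝ (Fin n)) : ℝ :=
  (2 * π * β) ^ (-(n : ℝ) / 2) * exp (-‖x‖ ^ 2 / (2 * β))

/-- The standard Gaussian probability measure `dγ` on `ℝⁿ`. -/
def gaussMeasure (n : ℕ) : Measure (EuclideanSpace ℝ (Fin n)) :=
  volume.withDensity fun x => ENNReal.ofReal (gaussDensity n 1 x)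

/-- The Ornstein–Uhlenbeck semigroup
`P_s f(x) = ∫ f(e^{-s} x + √(1-e^{-2s}) y) dγ(y)`. -/
def OU (n : ℕ) (s : ℝ) (f : EuclideanSpace ℝ (Fin n) → ℝ)
    (x : EuclideanSpace ℝ (Fin n)) : ℝ :=
  ∫ y, f (exp (-s) • x + Real.sqrt (1 - exp (-2 * s)) • y) ∂(gaussMeasure n)

/-- The `L^r(γ)` functional `(∫ g^r dγ)^{1/r}` (for positive `g`). -/
def gaussLr (n : ℕ) (r : ℝ) (g : EuclideanSpace ℝ (Fin n) → ℝ) : ℝ :=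
  (∫ x, g x ^ r ∂(gaussMeasure n)) ^ (1 / r)

/-- The entropy with respect to the Gaussian measure:
`Ent_γ(f) = ∫ f log f dγ - (∫ f dγ) log (∫ f dγ)`. -/
def gaussEnt (n : ℕ) (f : EuclideanSpace ℝ (Fin n) → ℝ) : ℝ :=
  ∫ x, f x * log (f x) ∂(gaussMeasure n)
    - (∫ x, f x ∂(gaussMeasure n)) * log (∫ x, f x ∂(gaussMeasure n))

/-- The Fisher information with respect to the Gaussian measure:
`I_γ(f) = ∫ |∇f|²/f dγ`. -/
def gaussFisher (n : ℕ) (f : EuclideanSpace ℝ (Fin n) → ℝ) : ℝ :=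
  ∫ x, ‖gradient f x‖ ^ 2 / f x ∂(gaussMeasure n)

/-- The Laplacian, as the sum of the second derivatives in the coordinate directions. -/
def lap (n : ℕ) (f : EuclideanSpace ℝ (Fin n) → ℝ) (x : EuclideanSpace ℝ (Fin n)) : ℝ :=
  ∑ i : Fin n,
    iteratedFDeriv ℝ 2 f x ![EuclideanSpace.single i (1 : ℝ), EuclideanSpace.single i (1 : ℝ)]

/-- The Hessian quadratic form `⟨u, ∇²f(x) u⟩`. -/
def hess (n : ℕ) (f : EuclideanSpace ℝ (Fin n) → ℝ)
    (x u : EuclideanSpace ℝ (Fin n)) : ℝ :=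
  iteratedFDeriv ℝ 2 f x ![u, u]

/-- The squared quadratic Wasserstein distance, as the infimum over couplings of the
integral of the squared distance. -/
def W2sq (n : ℕ) (μ ν : Measure (EuclideanSpace ℝ (Fin n))) : ℝ :=
  sInf { r : ℝ | ∃ pl : Measure (EuclideanSpace ℝ (Fin n) × EuclideanSpace ℝ (Fin n)),
    pl.map Prod.fst = μ ∧ pl.map Prod.snd = ν ∧ r = ∫ p, ‖p.1 - p.2‖ ^ 2 ∂pl }

/-- The covariance matrix of a probability density `v` on `ℝⁿ`. -/
def covMatrix (n : ℕ) (v : EuclideanSpace ℝ (Fin n) → ℝ) : Matrix (Fin n) (Fin n) ℝ :=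
  fun i j => (∫ x, x i * x j * v x) - (∫ x, x i * v x) * (∫ x, x j * v x)

/-- The Hopf–Lax (inf-convolution) formula `Q_τ f(x) = inf_y { f(y) + |x-y|²/(2τ) }`. -/
def hopfLax (n : ℕ) (τ : ℝ) (f : EuclideanSpace ℝ (Fin n) → ℝ)
    (x : EuclideanSpace ℝ (Fin n)) : ℝ :=
  ⨅ y, (f y + ‖x - y‖ ^ 2 / (2 * τ))

/-!
Pushing `μ` forward under `y ↦ e^{-t} y` and absorbing the normalising constant into it, `v_t`
becomes a Gaussian convolution `z ↦ ∫ exp (-‖z - y‖² / s) dν(y)` with `s = 2β(1 - e^{-2t})`.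
Differentiating twice under the integral sign, `∇² log` of such a convolution is
`-(2/s) id + (2/s)² Cov`, where `Cov` is the covariance of `y ↦ z - y` under the probability
measure proportional to `exp (-‖z - y‖² / s) dν(y)`; it is positive semidefinite by
Cauchy–Schwarz. For `FP(β)` take `2β` and `t_*`, for which `1 - e^{-2t_*} = 1/2`.
-/

open scoped RealInnerProductSpace

theorem sq_integral_mul_le_integral_mul_integral_mul_sq {α : Type*} [MeasurableSpace α]
    {μ : Measure α} {w f : α → ℝ} (hw : ∀ y, 0 ≤ w y) (hwi : Integrable w μ)
    (hwf : Integrable (fun y => w y * f y) μ) (hwf2 : Integrable (fun y => w y * f y ^ 2) μ) :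
    (∫ y, w y * f y ∂μ) ^ 2 ≤ (∫ y, w y ∂μ) * ∫ y, w y * f y ^ 2 ∂μ := by
  have hquad : ∀ c : ℝ, 0 ≤ (∫ y, w y ∂μ) * (c * c) + (-2 * ∫ y, w y * f y ∂μ) * c
      + ∫ y, w y * f y ^ 2 ∂μ := fun c => by
    have hexpand : ∫ y, w y * (f y - c) ^ 2 ∂μ = (∫ y, w y ∂μ) * (c * c)
        + (-2 * ∫ y, w y * f y ∂μ) * c + ∫ y, w y * f y ^ 2 ∂μ := by
      have hpt : (fun y => w y * (f y - c) ^ 2)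
          = fun y => (c * c) * w y + (-2 * c) * (w y * f y) + w y * f y ^ 2 := by
        funext y; ring
      rw [hpt, integral_add ((hwi.const_mul _).fun_add (hwf.const_mul _)) hwf2,
        integral_add (hwi.const_mul _) (hwf.const_mul _), integral_const_mul, integral_const_mul]
      ring
    rw [← hexpand]
    exact integral_nonneg fun y => mul_nonneg (hw y) (sq_nonneg _)
  have := discrim_le_zero hquad
  rw [discrim] at this
  linarith

section LogHessian

variable {E : Type*} [NormedAddCommGroup E] [NormedSpace ℝ E]

theorem iteratedFDeriv_two_apply_of_hasFDerivAt {F : Type*} [NormedAddCommGroup F]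
    [NormedSpace ℝ F] {f : E → F} {f' : E → E →L[ℝ] F} {f'' : E →L[ℝ] E →L[ℝ] F} {x : E}
    (hf : ∀ z, HasFDerivAt f (f' z) z) (hf' : HasFDerivAt f' f'' x) (u v : E) :
    iteratedFDeriv ℝ 2 f x ![u, v] = f'' u v := by
  rw [iteratedFDeriv_two_apply, funext fun z => (hf z).fderiv, hf'.fderiv]
  rfl

theorem iteratedFDeriv_two_log_apply {f : E → ℝ} {f' : E → E →L[ℝ] ℝ}
    {f'' : E →L[ℝ] E →L[ℝ] ℝ} {x : E} (hf : ∀ z, HasFDerivAt f (f' z) z)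
    (hf' : HasFDerivAt f' f'' x) (hpos : ∀ z, 0 < f z) (u v : E) :
    iteratedFDeriv ℝ 2 (fun z => log (f z)) x ![u, v]
      = f'' u v / f x - f' x u * f' x v / f x ^ 2 := by
  have hlog : ∀ z, HasFDerivAt (fun z => log (f z)) ((f z)⁻¹ • f' z) z :=
    fun z => (hf z).log (hpos z).ne'
  have hinv : HasFDerivAt (fun z => (f z)⁻¹) (-((f x) ^ 2)⁻¹ • f' x) x :=
    (hasDerivAt_inv (hpos x).ne').comp_hasFDerivAt x (hf x)
  rw [iteratedFDeriv_two_apply_of_hasFDerivAt hlog (hinv.smul hf')]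
  simp only [add_apply, smul_apply,
    ContinuousLinearMap.smulRight_apply, smul_eq_mul]
  ring

end LogHessian

section GaussKernel

variable {E : Type*} [NormedAddCommGroup E] {s : ℝ}

def gaussKernel (s : ℝ) (w : E) : ℝ := exp (-‖w‖ ^ 2 / s)

theorem gaussKernel_pos (s : ℝ) (w : E) : 0 < gaussKernel s w := exp_pos _

theorem continuous_gaussKernel (s : ℝ) : Continuous (gaussKernel (E := E) s) := by
  unfold gaussKernel
  fun_prop

theorem gaussKernel_le_one (hs : 0 ≤ s) (w : E) : gaussKernel s w ≤ 1 :=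
  exp_le_one_iff.mpr (div_nonpos_of_nonpos_of_nonneg (neg_nonpos.mpr (sq_nonneg _)) hs)

theorem norm_gaussKernel_le_one (hs : 0 ≤ s) (w : E) : ‖gaussKernel s w‖ ≤ 1 := by
  rw [norm_of_nonneg (gaussKernel_pos s w).le]
  exact gaussKernel_le_one hs w

theorem gaussKernel_mul_norm_sq_le (hs : 0 < s) (w : E) : gaussKernel s w * ‖w‖ ^ 2 ≤ s := by
  have hx : ‖w‖ ^ 2 / s ≤ exp (‖w‖ ^ 2 / s) := by linarith [add_one_le_exp (‖w‖ ^ 2 / s)]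
  calc gaussKernel s w * ‖w‖ ^ 2 = s * (‖w‖ ^ 2 / s) / exp (‖w‖ ^ 2 / s) := by
        rw [gaussKernel, neg_div, exp_neg]; field_simp
    _ ≤ s := by
        rw [div_le_iff₀ (exp_pos _)]
        exact mul_le_mul_of_nonneg_left hx hs.le

theorem gaussKernel_mul_norm_le (hs : 0 < s) (w : E) : gaussKernel s w * ‖w‖ ≤ √s := by
  have hk := gaussKernel_pos s w
  rw [le_sqrt (by positivity) hs.le]
  calc (gaussKernel s w * ‖w‖) ^ 2 = gaussKernel s w * (gaussKernel s w * ‖w‖ ^ 2) := by ring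
    _ ≤ 1 * s := mul_le_mul (gaussKernel_le_one hs.le w) (gaussKernel_mul_norm_sq_le hs w)
        (by positivity) zero_le_one
    _ = s := one_mul s

variable [InnerProductSpace ℝ E]

/-- `innerSL ℝ`, retyped from a conjugate-linear to a linear map so that it can be added to
other bilinear maps. -/
def innerBilin : E →L[ℝ] E →L[ℝ] ℝ := innerSL ℝ

theorem innerBilin_apply_apply (u v : E) : innerBilin u v = ⟪u, v⟫ := rfl

theorem norm_innerBilin_le : ‖(innerBilin : E →L[ℝ] E →L[ℝ] ℝ)‖ ≤ 1 := norm_innerSL_le ℝ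

def gaussKernelFDeriv (s : ℝ) (w : E) : E →L[ℝ] ℝ :=
  (-(2 / s) * gaussKernel s w) • innerSL ℝ w

def gaussKernelFDeriv2 (s : ℝ) (w : E) : E →L[ℝ] E →L[ℝ] ℝ :=
  (-(2 / s) * gaussKernel s w) • innerBilin
    + (-(2 / s) • gaussKernelFDeriv s w).smulRight (innerSL ℝ w)

theorem abs_gaussKernel_mul_inner_le (hs : 0 < s) (w u : E) :
    |gaussKernel s w * ⟪w, u⟫| ≤ √s * ‖u‖ := by
  rw [abs_mul, abs_of_pos (gaussKernel_pos s w)]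
  calc gaussKernel s w * |⟪w, u⟫| ≤ gaussKernel s w * (‖w‖ * ‖u‖) :=
        mul_le_mul_of_nonneg_left (abs_real_inner_le_norm w u) (gaussKernel_pos s w).le
    _ = gaussKernel s w * ‖w‖ * ‖u‖ := by ring
    _ ≤ √s * ‖u‖ := by gcongr; exact gaussKernel_mul_norm_le hs w

theorem gaussKernel_mul_inner_sq_le (hs : 0 < s) (w u : E) :
    gaussKernel s w * ⟪w, u⟫ ^ 2 ≤ s * ‖u‖ ^ 2 := by
  have hinner : ⟪w, u⟫ ^ 2 ≤ ‖w‖ ^ 2 * ‖u‖ ^ 2 := by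
    rw [← mul_pow, ← sq_abs]
    exact pow_le_pow_left₀ (abs_nonneg _) (abs_real_inner_le_norm w u) 2
  calc gaussKernel s w * ⟪w, u⟫ ^ 2 ≤ gaussKernel s w * ‖w‖ ^ 2 * ‖u‖ ^ 2 := by
        rw [mul_assoc]; exact mul_le_mul_of_nonneg_left hinner (gaussKernel_pos s w).le
    _ ≤ s * ‖u‖ ^ 2 := by gcongr; exact gaussKernel_mul_norm_sq_le hs w

theorem gaussKernelFDeriv_apply (s : ℝ) (w u : E) :
    gaussKernelFDeriv s w u = -(2 / s) * (gaussKernel s w * ⟪w, u⟫) := by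
  simp only [gaussKernelFDeriv, smul_apply, innerSL_apply_apply, smul_eq_mul]
  ring

theorem gaussKernelFDeriv2_apply_apply (s : ℝ) (w u v : E) :
    gaussKernelFDeriv2 s w u v = -(2 / s) * gaussKernel s w * ⟪u, v⟫
      + (2 / s) ^ 2 * (gaussKernel s w * ⟪w, u⟫ * ⟪w, v⟫) := by
  simp only [gaussKernelFDeriv2, add_apply, smul_apply, ContinuousLinearMap.smulRight_apply,
    gaussKernelFDeriv_apply, innerSL_apply_apply, innerBilin_apply_apply, smul_eq_mul]
  ring

theorem hasFDerivAt_gaussKernel (s : ℝ) (w : E) :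
    HasFDerivAt (gaussKernel s) (gaussKernelFDeriv s w) w := by
  have hq : HasFDerivAt (fun w : E => -‖w‖ ^ 2 / s) ((-(2 / s)) • innerSL ℝ w) w :=
    ((hasFDerivAt_id w).norm_sq.neg.mul_const s⁻¹).congr_fderiv (by
      ext v; simp; ring)
  exact hq.exp.congr_fderiv (by ext v; simp [gaussKernelFDeriv, gaussKernel]; ring)

theorem hasFDerivAt_gaussKernelFDeriv (s : ℝ) (w : E) :
    HasFDerivAt (gaussKernelFDeriv s) (gaussKernelFDeriv2 s w) w :=
  ((hasFDerivAt_gaussKernel s w).const_mul (-(2 / s))).smul innerBilin.hasFDerivAt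

theorem continuous_gaussKernelFDeriv (s : ℝ) : Continuous (gaussKernelFDeriv (E := E) s) :=
  continuous_iff_continuousAt.mpr fun w => (hasFDerivAt_gaussKernelFDeriv s w).continuousAt

theorem continuous_gaussKernelFDeriv2 (s : ℝ) : Continuous (gaussKernelFDeriv2 (E := E) s) := by
  have hsmul : Continuous fun w : E =>
      (-(2 / s) * gaussKernel s w) • (innerBilin : E →L[ℝ] E →L[ℝ] ℝ) :=
    (continuous_const.mul (continuous_gaussKernel s)).smul continuous_const
  have hsmulRight : Continuous fun w : E =>
      (-(2 / s) • gaussKernelFDeriv s w).smulRight (innerSL ℝ w) :=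
    ((ContinuousLinearMap.smulRightL ℝ E (E →L[ℝ] ℝ)).continuous.comp
      ((continuous_gaussKernelFDeriv s).fun_const_smul _)).clm_apply (innerSL ℝ).continuous
  -- instance search does not find this one on iterated spaces of continuous linear maps
  have : ContinuousAdd (E →L[ℝ] E →L[ℝ] ℝ) :=
    ContinuousLinearMap.topologicalAddGroup.toContinuousAdd
  exact hsmul.add hsmulRight

theorem norm_gaussKernelFDeriv (hs : 0 < s) (w : E) :
    ‖gaussKernelFDeriv s w‖ = 2 / s * (gaussKernel s w * ‖w‖) := by
  rw [gaussKernelFDeriv, norm_smul, innerSL_apply_norm, norm_mul, norm_neg,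
    Real.norm_of_nonneg (by positivity), Real.norm_of_nonneg (gaussKernel_pos s w).le]
  ring

theorem norm_gaussKernelFDeriv_le (hs : 0 < s) (w : E) : ‖gaussKernelFDeriv s w‖ ≤ 2 / s * √s := by
  rw [norm_gaussKernelFDeriv hs]
  gcongr
  exact gaussKernel_mul_norm_le hs w

theorem norm_gaussKernelFDeriv2_le (hs : 0 < s) (w : E) : ‖gaussKernelFDeriv2 s w‖ ≤ 6 / s := by
  have hk := gaussKernel_pos s w
  have hsmul : ‖(-(2 / s) * gaussKernel s w) • (innerBilin : E →L[ℝ] E →L[ℝ] ℝ)‖ ≤ 2 / s :=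
    calc _ ≤ ‖-(2 / s) * gaussKernel s w‖ * ‖(innerBilin : E →L[ℝ] E →L[ℝ] ℝ)‖ :=
          ContinuousLinearMap.opNorm_smul_le _ _
      _ ≤ 2 / s * 1 * 1 := by
          rw [norm_mul, norm_neg, norm_of_nonneg (by positivity), norm_of_nonneg hk.le]
          gcongr
          exacts [gaussKernel_le_one hs.le w, norm_innerBilin_le]
      _ = 2 / s := by ring
  have hsmulRight : ‖(-(2 / s) • gaussKernelFDeriv s w).smulRight (innerSL ℝ w)‖ ≤ 4 / s :=
    calc _ ≤ ‖-(2 / s)‖ * ‖gaussKernelFDeriv s w‖ * ‖innerSL ℝ w‖ := by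
          rw [ContinuousLinearMap.norm_smulRight_apply]
          gcongr
          exact ContinuousLinearMap.opNorm_smul_le _ _
      _ = (2 / s) ^ 2 * (gaussKernel s w * ‖w‖ ^ 2) := by
          rw [innerSL_apply_norm, norm_gaussKernelFDeriv hs, norm_neg,
            norm_of_nonneg (by positivity)]
          ring
      _ ≤ (2 / s) ^ 2 * s := by gcongr; exact gaussKernel_mul_norm_sq_le hs w
      _ = 4 / s := by field_simp; ring
  calc ‖gaussKernelFDeriv2 s w‖ ≤ 2 / s + 4 / s :=
        (norm_add_le (E := E →L[ℝ] E →L[ℝ] ℝ) _ _).trans (add_le_add hsmul hsmulRight)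
    _ = 6 / s := by ring

end GaussKernel

section IntegralCompSub

variable {E F : Type*} [NormedAddCommGroup E] [MeasurableSpace E] [OpensMeasurableSpace E]
  [SecondCountableTopology E] [NormedAddCommGroup F] {μ : Measure E} [IsFiniteMeasure μ]

theorem integrable_comp_sub_of_norm_le {k : E → F} (hk : Continuous k) {C : ℝ}
    (hC : ∀ w, ‖k w‖ ≤ C) (x : E) : Integrable (fun y => k (x - y)) μ :=
  .of_bound (hk.comp (continuous_const.sub continuous_id)).aestronglyMeasurable C
    (ae_of_all _ fun _ => hC _)

variable [NormedSpace ℝ E] [NormedSpace ℝ F]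

theorem hasFDerivAt_integral_comp_sub {k : E → F} {k' : E → E →L[ℝ] F} {C₀ C₁ : ℝ}
    (hk : ∀ w, HasFDerivAt k (k' w) w) (hk' : Continuous k') (hk_le : ∀ w, ‖k w‖ ≤ C₀)
    (hk'_le : ∀ w, ‖k' w‖ ≤ C₁) (x : E) :
    HasFDerivAt (fun z => ∫ y, k (z - y) ∂μ) (∫ y, k' (x - y) ∂μ) x := by
  have hkc : Continuous k := continuous_iff_continuousAt.mpr fun w => (hk w).continuousAt
  refine hasFDerivAt_integral_of_dominated_of_fderiv_le (F' := fun z y => k' (z - y))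
    (bound := fun _ => C₁) univ_mem
    (.of_forall fun z => (integrable_comp_sub_of_norm_le hkc hk_le z).aestronglyMeasurable)
    (integrable_comp_sub_of_norm_le hkc hk_le x)
    (integrable_comp_sub_of_norm_le hk' hk'_le x).aestronglyMeasurable
    (ae_of_all _ fun _ _ _ => hk'_le _) (integrable_const _) (ae_of_all _ fun y z _ => ?_)
  exact ((hk (z - y)).comp z ((hasFDerivAt_id z).sub_const y)).congr_fderiv (by ext; simp)

end IntegralCompSub

section LogGaussianConvolution

variable {E : Type*} [NormedAddCommGroup E] [MeasurableSpace E] [BorelSpace E]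
  [SecondCountableTopology E] {s : ℝ} {μ : Measure E} [IsFiniteMeasure μ]

theorem integrable_gaussKernel (hs : 0 ≤ s) (z : E) :
    Integrable (fun y => gaussKernel s (z - y)) μ :=
  integrable_comp_sub_of_norm_le (continuous_gaussKernel s) (norm_gaussKernel_le_one hs) z

theorem integral_gaussKernel_pos (hs : 0 ≤ s) (hμ : μ ≠ 0) (z : E) :
    0 < ∫ y, gaussKernel s (z - y) ∂μ := by
  rw [integral_pos_iff_support_of_nonneg (fun y => (gaussKernel_pos s _).le)
      (integrable_gaussKernel hs z),
    Function.support_eq_univ fun y => (gaussKernel_pos s _).ne']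
  exact Measure.measure_univ_pos.mpr hμ

variable [InnerProductSpace ℝ E]

theorem integrable_gaussKernel_mul_inner (hs : 0 < s) (x u : E) :
    Integrable (fun y => gaussKernel s (x - y) * ⟪x - y, u⟫) μ :=
  integrable_comp_sub_of_norm_le (k := fun w => gaussKernel s w * ⟪w, u⟫)
    ((continuous_gaussKernel s).mul (continuous_id.inner continuous_const))
    (fun w => (norm_eq_abs _).trans_le (abs_gaussKernel_mul_inner_le hs w u)) x

theorem integrable_gaussKernel_mul_inner_sq (hs : 0 < s) (x u : E) :
    Integrable (fun y => gaussKernel s (x - y) * ⟪x - y, u⟫ ^ 2) μ :=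
  integrable_comp_sub_of_norm_le (k := fun w => gaussKernel s w * ⟪w, u⟫ ^ 2)
    ((continuous_gaussKernel s).mul ((continuous_id.inner continuous_const).pow 2))
    (fun w => by
      rw [norm_of_nonneg (mul_nonneg (gaussKernel_pos s w).le (sq_nonneg _))]
      exact gaussKernel_mul_inner_sq_le hs w u) x

theorem iteratedFDeriv_two_log_integral_gaussKernel (hs : 0 < s) (hμ : μ ≠ 0) (x u : E) :
    iteratedFDeriv ℝ 2 (fun z => log (∫ y, gaussKernel s (z - y) ∂μ)) x ![u, u]
      = -(2 / s) * ‖u‖ ^ 2 + (2 / s) ^ 2 *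
        ((∫ y, gaussKernel s (x - y) * ⟪x - y, u⟫ ^ 2 ∂μ) / ∫ y, gaussKernel s (x - y) ∂μ
          - ((∫ y, gaussKernel s (x - y) * ⟪x - y, u⟫ ∂μ) / ∫ y, gaussKernel s (x - y) ∂μ)
            ^ 2) := by
  have hI : ∀ z, HasFDerivAt (fun z => ∫ y, gaussKernel s (z - y) ∂μ)
      (∫ y, gaussKernelFDeriv s (z - y) ∂μ) z :=
    hasFDerivAt_integral_comp_sub (hasFDerivAt_gaussKernel s) (continuous_gaussKernelFDeriv s)
      (norm_gaussKernel_le_one hs.le) (norm_gaussKernelFDeriv_le hs)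
  have hI' := hasFDerivAt_integral_comp_sub (μ := μ) (F := E →L[ℝ] ℝ)
    (hasFDerivAt_gaussKernelFDeriv s) (continuous_gaussKernelFDeriv2 s)
    (norm_gaussKernelFDeriv_le hs) (norm_gaussKernelFDeriv2_le hs) x
  have iF1 := integrable_comp_sub_of_norm_le (μ := μ) (continuous_gaussKernelFDeriv s)
    (norm_gaussKernelFDeriv_le hs) x
  have iF2 := integrable_comp_sub_of_norm_le (μ := μ) (F := E →L[ℝ] E →L[ℝ] ℝ)
    (continuous_gaussKernelFDeriv2 s) (norm_gaussKernelFDeriv2_le hs) x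
  rw [iteratedFDeriv_two_log_apply hI hI' (integral_gaussKernel_pos hs.le hμ),
    ContinuousLinearMap.integral_apply iF2,
    ContinuousLinearMap.integral_apply (iF2.apply_continuousLinearMap u),
    ContinuousLinearMap.integral_apply iF1]
  have hsq : ∀ y, gaussKernel s (x - y) * ⟪x - y, u⟫ * ⟪x - y, u⟫
      = gaussKernel s (x - y) * ⟪x - y, u⟫ ^ 2 := fun y => by ring
  simp only [gaussKernelFDeriv_apply, gaussKernelFDeriv2_apply_apply, real_inner_self_eq_norm_sq,
    hsq]
  rw [integral_add (((integrable_gaussKernel hs.le x).const_mul _).mul_const _)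
      ((integrable_gaussKernel_mul_inner_sq hs x u).const_mul _),
    integral_mul_const, integral_const_mul, integral_const_mul, integral_const_mul]
  have hA := (integral_gaussKernel_pos hs.le hμ x).ne'
  field_simp
  ring

theorem le_iteratedFDeriv_two_log_integral_gaussKernel (hs : 0 < s) (hμ : μ ≠ 0) (x u : E) :
    -(2 / s) * ‖u‖ ^ 2
      ≤ iteratedFDeriv ℝ 2 (fun z => log (∫ y, gaussKernel s (z - y) ∂μ)) x ![u, u] := by
  rw [iteratedFDeriv_two_log_integral_gaussKernel hs hμ]
  have hA := integral_gaussKernel_pos hs.le hμ x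
  have hCS := sq_integral_mul_le_integral_mul_integral_mul_sq (μ := μ)
    (fun y => (gaussKernel_pos s (x - y)).le) (integrable_gaussKernel hs.le x)
    (integrable_gaussKernel_mul_inner hs x u) (integrable_gaussKernel_mul_inner_sq hs x u)
  have hvar : 0 ≤ (∫ y, gaussKernel s (x - y) * ⟪x - y, u⟫ ^ 2 ∂μ) / ∫ y, gaussKernel s (x - y) ∂μ
      - ((∫ y, gaussKernel s (x - y) * ⟪x - y, u⟫ ∂μ) / ∫ y, gaussKernel s (x - y) ∂μ)
        ^ 2 := by
    rw [sub_nonneg, div_pow, div_le_div_iff₀ (by positivity) hA]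
    nlinarith
  nlinarith [mul_nonneg (sq_nonneg (2 / s)) hvar]

end LogGaussianConvolution

theorem const_mul_integral_exp_eq_integral_gaussKernel {E : Type*} [NormedAddCommGroup E]
    [NormedSpace ℝ E] [MeasurableSpace E] [BorelSpace E] {C : ℝ} (hC : 0 ≤ C) (a s : ℝ)
    (μ : Measure E) (z : E) :
    C * ∫ y, exp (-‖z - a • y‖ ^ 2 / s) ∂μ
      = ∫ y, gaussKernel s (z - y) ∂(C.toNNReal • μ.map (a • ·)) := by
  rw [integral_smul_nnreal_measure,
    integral_map (f := fun y => gaussKernel s (z - y)) (by fun_prop)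
      ((continuous_gaussKernel s).comp (continuous_const.sub continuous_id)).aestronglyMeasurable,
    NNReal.smul_def, Real.coe_toNNReal _ hC, smul_eq_mul]
  rfl

section FokkerPlanck

variable {n : ℕ} {β t : ℝ}

/-- The solution `v_t` of the `β`-Fokker–Planck equation with initial measure `μ`. -/
def fokkerPlanckSol (n : ℕ) (β t : ℝ) (μ : Measure (EuclideanSpace ℝ (Fin n)))
    (z : EuclideanSpace ℝ (Fin n)) : ℝ :=
  (2 * π * β * (1 - exp (-2 * t))) ^ (-(n : ℝ) / 2)
    * ∫ y, exp (-‖z - exp (-t) • y‖ ^ 2 / (2 * β * (1 - exp (-2 * t)))) ∂μ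

theorem le_hess_log_fokkerPlanckSol (hβ : 0 < β) (ht : 0 < t)
    (μ : Measure (EuclideanSpace ℝ (Fin n))) [IsFiniteMeasure μ] (hμ : μ ≠ 0)
    (x u : EuclideanSpace ℝ (Fin n)) :
    -(1 / ((1 - exp (-2 * t)) * β)) * ‖u‖ ^ 2
      ≤ hess n (fun z => log (fokkerPlanckSol n β t μ z)) x u := by
  have h_one_sub_exp : 0 < 1 - exp (-2 * t) := sub_pos.mpr (exp_lt_one_iff.mpr (by linarith))
  rw [show 1 / ((1 - exp (-2 * t)) * β) = 2 / (2 * β * (1 - exp (-2 * t))) by field_simp]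
  set s := 2 * β * (1 - exp (-2 * t))
  set C := (2 * π * β * (1 - exp (-2 * t))) ^ (-(n : ℝ) / 2)
  have hs : 0 < s := by positivity
  have hC : 0 < C := by positivity
  set ν := C.toNNReal • μ.map (exp (-t) • ·)
  have hν : ν ≠ 0 :=
    smul_ne_zero (Real.toNNReal_pos.mpr hC).ne' ((Measure.map_ne_zero_iff (by fun_prop)).mpr hμ)
  have hfun : (fun z => log (fokkerPlanckSol n β t μ z))
      = fun z => log (∫ y, gaussKernel s (z - y) ∂ν) := by
    funext z
    rw [fokkerPlanckSol, const_mul_integral_exp_eq_integral_gaussKernel hC.le]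
  rw [hfun]
  exact le_iteratedFDeriv_two_log_integral_gaussKernel hs hν x u

end FokkerPlanck

theorem fokkerPlanck_semiLogConvexity_general
    (n : ℕ) (β t : ℝ) (hβ : 0 < β) (ht : 0 < t)
    (μ : Measure (EuclideanSpace ℝ (Fin n))) (hfin : IsFiniteMeasure μ) (hμ : μ ≠ 0) :
    (∀ x u : EuclideanSpace ℝ (Fin n),
      hess n (fun z => log ((2 * π * β * (1 - exp (-2 * t))) ^ (-(n : ℝ) / 2)
          * ∫ y, exp (-‖z - exp (-t) • y‖ ^ 2 / (2 * β * (1 - exp (-2 * t)))) ∂μ)) x u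
        ≥ -(1 / ((1 - exp (-2 * t)) * β)) * ‖u‖ ^ 2) ∧
    (∀ v : EuclideanSpace ℝ (Fin n) → ℝ,
      (∃ ν : Measure (EuclideanSpace ℝ (Fin n)), IsFiniteMeasure ν ∧ ν ≠ 0 ∧
        v = fun z =>
          (2 * π * (2 * β) * (1 - exp (-2 * ((1 : ℝ) / 2 * Real.log 2)))) ^ (-(n : ℝ) / 2)
            * ∫ y, exp (-‖z - exp (-((1 : ℝ) / 2 * Real.log 2)) • y‖ ^ 2
                / (2 * (2 * β) * (1 - exp (-2 * ((1 : ℝ) / 2 * Real.log 2))))) ∂ν) →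
      ∀ x u : EuclideanSpace ℝ (Fin n),
        hess n (fun z => log (v z)) x u ≥ -(1 / β) * ‖u‖ ^ 2) := by
  refine ⟨le_hess_log_fokkerPlanckSol hβ ht μ hμ, ?_⟩
  rintro v ⟨ν, hν, hν0, rfl⟩ x u
  have h := le_hess_log_fokkerPlanckSol (β := 2 * β) (t := 1 / 2 * Real.log 2) (by positivity)
    (by positivity) ν hν0 x u
  have ht_star : (1 - exp (-2 * ((1 : ℝ) / 2 * Real.log 2))) * (2 * β) = β := by
    rw [show -2 * ((1 : ℝ) / 2 * Real.log 2) = -Real.log 2 by ring, exp_neg, exp_log two_pos]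
    ring
  rwa [ht_star] at h

/-- Semi-log-convexity of solutions to the Fokker–Planck equation with measure initial data,
and in particular of members of the class `FP(β)`. -/
theorem fokkerPlanck_semiLogConvexity
    (n : ℕ) (hn : 1 ≤ n) (β t : ℝ) (hβ : 0 < β) (ht : 0 < t)
    (μ : Measure (EuclideanSpace ℝ (Fin n))) (hfin : IsFiniteMeasure μ) (hμ : μ ≠ 0) :
    (∀ x u : EuclideanSpace ℝ (Fin n),
      hess n (fun z => log ((2 * π * β * (1 - exp (-2 * t))) ^ (-(n : ℝ) / 2)
          * ∫ y, exp (-‖z - exp (-t) • y‖ ^ 2 / (2 * β * (1 - exp (-2 * t)))) ∂μ)) x u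
        ≥ -(1 / ((1 - exp (-2 * t)) * β)) * ‖u‖ ^ 2) ∧
    (∀ v : EuclideanSpace ℝ (Fin n) → ℝ,
      (∃ ν : Measure (EuclideanSpace ℝ (Fin n)), IsFiniteMeasure ν ∧ ν ≠ 0 ∧
        v = fun z =>
          (2 * π * (2 * β) * (1 - exp (-2 * ((1 : ℝ) / 2 * Real.log 2)))) ^ (-(n : ℝ) / 2)
            * ∫ y, exp (-‖z - exp (-((1 : ℝ) / 2 * Real.log 2)) • y‖ ^ 2
                / (2 * (2 * β) * (1 - exp (-2 * ((1 : ℝ) / 2 * Real.log 2))))) ∂ν) →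
      ∀ x u : EuclideanSpace ℝ (Fin n),
        hess n (fun z => log (v z)) x u ≥ -(1 / β) * ‖u‖ ^ 2) :=
  fokkerPlanck_semiLogConvexity_general n β t hβ ht μ hfin hμ

end
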